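/- Tseitin CNF-ization can lose validation information: for φ = A₁ ∨ (A₂ ∧ A₃) over A = {A₁, A₂, A₃}, its Tseitin CNF-ization ψ = (A₁ ∨ B₁) ∧ (¬B₁ ∨ A₂) ∧ (¬B₁ ∨ A₃) ∧ (B₁ ∨ ¬A₂ ∨ ¬A₃) over A ∪ {B₁}, and μ = {A₁ ↦ true}: μ validates φ, yet there is no total truth assignment δ on {B₁} such that μ∪δ validates ψ. -/

import Mathlib

/-- Propositional formulas over a set of atoms `α`, built from the constants
`⊤`/`⊥`, atoms, negation, conjunction and disjunction
(implication and bi-implication being the standard abbreviations). -/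
inductive PropForm (α : Type) : Type
  | tr : PropForm α
  | fls : PropForm α
  | atom : α → PropForm α
  | neg : PropForm α → PropForm α
  | conj : PropForm α → PropForm α → PropForm α
  | disj : PropForm α → PropForm α → PropForm α

namespace PropForm

variable {α β : Type}

/-- Standard two-valued semantics under a total truth assignment. -/
def eval (η : α → Bool) : PropForm α → Bool
  | tr => true
  | fls => false
  | atom a => η a
  | neg φ => !(eval η φ)
  | conj φ ψ => eval η φ && eval η ψ
  | disj φ ψ => eval η φ || eval η ψ

/-- Three-valued (Kleene) evaluation under a partial truth assignment
(`none` = unknown). -/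
def eval3 (μ : α → Option Bool) : PropForm α → Option Bool
  | tr => some true
  | fls => some false
  | atom a => μ a
  | neg φ => Option.map not (eval3 μ φ)
  | conj φ ψ =>
      match eval3 μ φ, eval3 μ ψ with
      | some false, _ => some false
      | _, some false => some false
      | some true, some true => some true
      | _, _ => none
  | disj φ ψ =>
      match eval3 μ φ, eval3 μ ψ with
      | some true, _ => some true
      | _, some true => some true
      | some false, some false => some false
      | _, _ => none

/-- Simplifying negation: `¬⊤ ⇒ ⊥`, `¬⊥ ⇒ ⊤`. -/
def mkNeg : PropForm α → PropForm α
  | tr => fls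
  | fls => tr
  | φ => neg φ

/-- Simplifying conjunction: `⊤∧φ ⇒ φ`, `⊥∧φ ⇒ ⊥`, `φ∧⊤ ⇒ φ`, `φ∧⊥ ⇒ ⊥`. -/
def mkConj : PropForm α → PropForm α → PropForm α
  | tr, ψ => ψ
  | fls, _ => fls
  | φ, tr => φ
  | _, fls => fls
  | φ, ψ => conj φ ψ

/-- Simplifying disjunction: `⊤∨φ ⇒ ⊤`, `⊥∨φ ⇒ φ`, `φ∨⊤ ⇒ ⊤`, `φ∨⊥ ⇒ φ`. -/
def mkDisj : PropForm α → PropForm α → PropForm α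
  | tr, _ => tr
  | fls, ψ => ψ
  | _, tr => tr
  | φ, fls => φ
  | φ, ψ => disj φ ψ

/-- The residual `φ|_μ` of `φ` under a partial assignment `μ`: substitute every
assigned atom with the constant `⊤`/`⊥` given by `μ` and recursively apply the
standard truth-value propagation rules. -/
def residual (μ : α → Option Bool) : PropForm α → PropForm α
  | tr => tr
  | fls => fls
  | atom a =>
      match μ a with
      | some true => tr
      | some false => fls
      | none => atom a
  | neg φ => mkNeg (residual μ φ)
  | conj φ ψ => mkConj (residual μ φ) (residual μ ψ)
  | disj φ ψ => mkDisj (residual μ φ) (residual μ ψ)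

/-- The total assignment `η` extends the partial assignment `μ`. -/
def Extends (μ : α → Option Bool) (η : α → Bool) : Prop :=
  ∀ a b, μ a = some b → η a = b

/-- View a total assignment as a partial one. -/
def totalize (η : α → Bool) : α → Option Bool := fun a => some (η a)

/-- The partial assignment `μ` *entails* `φ` (`μ ⊨ φ`): every total
assignment extending `μ` satisfies `φ`. -/
def Entails (μ : α → Option Bool) (φ : PropForm α) : Prop :=
  ∀ η : α → Bool, Extends μ η → eval η φ = true

/-- The partial assignment `μ` *validates* `φ` (`μ ⊢ φ`): the residual
`φ|_μ` is syntactically `⊤`. -/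
def Validates (μ : α → Option Bool) (φ : PropForm α) : Prop :=
  residual μ φ = tr

/-- `φ` is valid: every total assignment satisfies it. -/
def Valid (φ : PropForm α) : Prop :=
  ∀ η : α → Bool, eval η φ = true

/-- Big disjunction `⋁` of a list of formulas. -/
def bigDisj : List (PropForm α) → PropForm α
  | [] => fls
  | [φ] => φ
  | φ :: rest => disj φ (bigDisj rest)

/-- Big conjunction `⋀` of a list of formulas. -/
def bigConj : List (PropForm α) → PropForm α
  | [] => tr
  | [φ] => φ
  | φ :: rest => conj φ (bigConj rest)

/-- The cube `⋀μ` of a partial assignment `μ`: the conjunction of the literals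
`A` with `μ A = true` and `¬A` with `μ A = false`. -/
noncomputable def cubeOf [Fintype α] (μ : α → Option Bool) : PropForm α :=
  bigConj ((Finset.univ : Finset α).toList.filterMap fun a =>
    match μ a with
    | some true => some (atom a)
    | some false => some (neg (atom a))
    | none => none)

/-- `φ` is a literal: an atom or the negation of an atom. -/
def IsLit : PropForm α → Prop
  | atom _ => True
  | neg (atom _) => True
  | _ => False

/-- `φ` is a clause: a disjunction of literals. -/
inductive IsClause : PropForm α → Prop
  | lit {φ : PropForm α} : IsLit φ → IsClause φ
  | disj {φ ψ : PropForm α} : IsClause φ → IsClause ψ → IsClause (PropForm.disj φ ψ)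

/-- `φ` is a cube: a conjunction of literals. -/
inductive IsCube : PropForm α → Prop
  | lit {φ : PropForm α} : IsLit φ → IsCube φ
  | conj {φ ψ : PropForm α} : IsCube φ → IsCube ψ → IsCube (PropForm.conj φ ψ)

/-- `φ` is in CNF: a conjunction of clauses. -/
inductive IsCNF : PropForm α → Prop
  | clause {φ : PropForm α} : IsClause φ → IsCNF φ
  | conj {φ ψ : PropForm α} : IsCNF φ → IsCNF ψ → IsCNF (PropForm.conj φ ψ)

/-- The clauses of a CNF formula. -/
def clauses : PropForm α → List (PropForm α)
  | conj φ ψ => clauses φ ++ clauses ψ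
  | φ => [φ]

/-- The (signed) literals of a clause: `(true, a)` for the positive literal `a`,
`(false, a)` for the negative literal `¬a`. -/
def lits : PropForm α → List (Bool × α)
  | atom a => [(true, a)]
  | neg (atom a) => [(false, a)]
  | disj φ ψ => lits φ ++ lits ψ
  | _ => []

/-- A CNF formula is tautology-free iff no clause of it contains both an atom
and its negation. -/
def TautologyFree (φ : PropForm α) : Prop :=
  ∀ c ∈ clauses φ, ¬ ∃ a, (true, a) ∈ lits c ∧ (false, a) ∈ lits c

/-- The atoms occurring in a formula. -/
def atoms : PropForm α → List α
  | tr => []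
  | fls => []
  | atom a => [a]
  | neg φ => atoms φ
  | conj φ ψ => atoms φ ++ atoms ψ
  | disj φ ψ => atoms φ ++ atoms ψ

/-- Residual of a formula over `α ⊕ β` under a total assignment on the
`β`-atoms: the resulting formula is over `α`. -/
def residualB (δ : β → Bool) : PropForm (α ⊕ β) → PropForm α
  | tr => tr
  | fls => fls
  | atom (Sum.inl a) => atom a
  | atom (Sum.inr b) => if δ b then tr else fls
  | neg φ => mkNeg (residualB δ φ)
  | conj φ ψ => mkConj (residualB δ φ) (residualB δ ψ)
  | disj φ ψ => mkDisj (residualB δ φ) (residualB δ ψ)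

/-- The Shannon expansion `∃[ψ]_B` of `∃B.ψ`: the disjunction, over all total
truth assignments `δ` on the `β`-atoms, of the residuals `ψ|_δ`. -/
noncomputable def shannon [Fintype β] [DecidableEq β] (ψ : PropForm (α ⊕ β)) : PropForm α :=
  bigDisj ((Finset.univ : Finset (β → Bool)).toList.map fun δ => residualB δ ψ)

/-- The combined partial assignment `μ∪δ` on `α ⊕ β` of a partial assignment
`μ` on `α` and a total assignment `δ` on `β`. -/
def combine (μ : α → Option Bool) (δ : β → Bool) : α ⊕ β → Option Bool :=
  Sum.elim μ (fun b => some (δ b))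

end PropForm

open PropForm

/-- `φ = A₁ ∨ (A₂ ∧ A₃)` over `A = {A₁,A₂,A₃}`. -/
def phi15 : PropForm (Fin 3) :=
  PropForm.disj (PropForm.atom 0) (PropForm.conj (PropForm.atom 1) (PropForm.atom 2))

/-- The Tseitin CNF-ization
`ψ = (A₁ ∨ B₁) ∧ (¬B₁ ∨ A₂) ∧ (¬B₁ ∨ A₃) ∧ (B₁ ∨ ¬A₂ ∨ ¬A₃)` over `A ∪ {B₁}`. -/
def psi15 : PropForm (Fin 3 ⊕ Fin 1) :=
  PropForm.conj
    (PropForm.disj (PropForm.atom (Sum.inl 0)) (PropForm.atom (Sum.inr 0)))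
    (PropForm.conj
      (PropForm.disj (PropForm.neg (PropForm.atom (Sum.inr 0))) (PropForm.atom (Sum.inl 1)))
      (PropForm.conj
        (PropForm.disj (PropForm.neg (PropForm.atom (Sum.inr 0))) (PropForm.atom (Sum.inl 2)))
        (PropForm.disj (PropForm.atom (Sum.inr 0))
          (PropForm.disj (PropForm.neg (PropForm.atom (Sum.inl 1)))
            (PropForm.neg (PropForm.atom (Sum.inl 2)))))))

/-!
Validation is sound: a residual that is syntactically `⊤` means that every total
extension of the partial assignment satisfies the formula. The Tseitin clauses force
`B₁ ↔ A₂ ∧ A₃`, while `μ∪δ` fixes `B₁` and leaves `A₂`, `A₃` free, so the extension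
with `A₂ = A₃ = ¬B₁` falsifies `ψ`.
-/

namespace PropForm

variable {α β : Type}

@[simp]
theorem eval_mkNeg (η : α → Bool) (φ : PropForm α) : eval η (mkNeg φ) = !eval η φ := by
  cases φ <;> rfl

@[simp]
theorem eval_mkConj (η : α → Bool) (φ ψ : PropForm α) :
    eval η (mkConj φ ψ) = (eval η φ && eval η ψ) := by
  cases φ <;> cases ψ <;> simp [mkConj, eval]

@[simp]
theorem eval_mkDisj (η : α → Bool) (φ ψ : PropForm α) :
    eval η (mkDisj φ ψ) = (eval η φ || eval η ψ) := by
  cases φ <;> cases ψ <;> simp [mkDisj, eval]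

theorem eval_residual {μ : α → Option Bool} {η : α → Bool} (h : Extends μ η) (φ : PropForm α) :
    eval η (residual μ φ) = eval η φ := by
  induction φ with
  | atom a =>
    simp only [residual]
    split <;> simp_all [eval, h a]
  | _ => simp_all [residual, eval]

theorem Validates.entails {μ : α → Option Bool} {φ : PropForm α} (h : Validates μ φ) :
    Entails μ φ := fun η hη => by
  rw [← eval_residual hη, h, eval]

theorem Extends.combine {μ : α → Option Bool} {η : α → Bool} (h : Extends μ η) (δ : β → Bool) :
    Extends (combine μ δ) (Sum.elim η δ) := by
  rintro (a | b) v hv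
  · exact h a v hv
  · exact Option.some_injective _ hv

end PropForm

theorem eval_psi15_eq_false (δ : Fin 1 → Bool) :
    eval (Sum.elim ![true, !δ 0, !δ 0] δ) psi15 = false := by
  simp only [psi15, eval, Sum.elim_inl, Sum.elim_inr]
  cases δ 0 <;> rfl

/-- Tseitin CNF-ization can lose validation information:
`μ = {A₁ ↦ true}` validates `φ`, yet no total assignment `δ` on `{B₁}` makes
`μ∪δ` validate `ψ`. -/
theorem tseitin_loses_validation :
    Validates (fun i : Fin 3 => if i = 0 then some true else none) phi15 ∧
    ¬ ∃ δ : Fin 1 → Bool,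
        Validates (combine (fun i : Fin 3 => if i = 0 then some true else none) δ) psi15 := by
  refine ⟨rfl, fun ⟨δ, hδ⟩ => ?_⟩
  have hext : Extends (fun i : Fin 3 => if i = 0 then some true else none) ![true, !δ 0, !δ 0] := by
    intro i v hv
    fin_cases i <;> simp_all
  simpa [eval_psi15_eq_false] using hδ.entails _ (hext.combine δ)
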